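/- For each n ∈ ℕ let G_n be the graph with vertex set {0,1,…,n} × {0,1,…,n} and the following edges: (p,q−1)(p,q) for all 0 ≤ p ≤ n and 1 ≤ q ≤ n; (p−1,0)(p,0) and (p−1,n)(p,n) for all 1 ≤ p ≤ n; and, for 1 ≤ q ≤ n−1, the edge (p−1,q)(p,q) is present iff (p odd and q ≡ 0 mod 4) or (p even and q ≡ 2 mod 4). Let G be the graph obtained from the graph ℕ (with n adjacent to n+1) by attaching, for each n, the vertex (0,0) of G_n to the vertex n of ℕ, with every edge of G of length 1. Then G is not ε-densely k-path-chordal for any ε > 0 and any k > 10: for n ≥ max{k, 2ε}, on the geodesic-square cycle in G_n with corner vertices (0,0), (n,0), (n,n), (0,n), no vertex of the form (0,q), 0 ≤ q ≤ n, is a shortcut vertex. -/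

import Mathlib

open SimpleGraph

namespace Chordality

variable {V : Type*} {G : SimpleGraph V}

/-- The length of a walk in a graph whose edge `e` has length `ℓ e`. -/
noncomputable def wlen (ℓ : Sym2 V → ℝ) {u v : V} (w : G.Walk u v) : ℝ :=
  (w.edges.map ℓ).sum

/-- The path metric of a metric graph: the infimum of the lengths of walks joining
two vertices. -/
noncomputable def gdist (G : SimpleGraph V) (ℓ : Sym2 V → ℝ) (u v : V) : ℝ :=
  sInf {x : ℝ | ∃ w : G.Walk u v, wlen ℓ w = x}

/-- A walk is geodesic if its length realizes the path metric between its endpoints. -/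
def IsGeodesicWalk (ℓ : Sym2 V → ℝ) {u v : V} (w : G.Walk u v) : Prop :=
  wlen ℓ w = gdist G ℓ u v

/-- `G`, with edge lengths `ℓ`, is a metric graph: connected, locally finite,
with positive edge lengths. -/
def IsMetricGraph (G : SimpleGraph V) (ℓ : Sym2 V → ℝ) : Prop :=
  G.Connected ∧ (∀ e ∈ G.edgeSet, 0 < ℓ e) ∧ ∀ v : V, (G.neighborSet v).Finite

/-- A walk lies inside the closed walk `c`. -/
def WalkIn {z u v : V} (c : G.Walk z z) (w : G.Walk u v) : Prop :=
  (∀ e ∈ w.edges, e ∈ c.edges) ∧ ∀ a ∈ w.support, a ∈ c.support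

/-- The length metric `d_C` of a cycle `c`, evaluated on vertices of `c`:
the infimum of lengths of walks joining `u` and `v` inside `c`. -/
noncomputable def cdist (ℓ : Sym2 V → ℝ) {z : V} (c : G.Walk z z) (u v : V) : ℝ :=
  sInf {x : ℝ | ∃ w : G.Walk u v, WalkIn c w ∧ wlen ℓ w = x}

/-- `σ` is a shortcut of the cycle `c`: a path joining two vertices `p, q` of `c`
with `L(σ) < d_C(p, q)`. -/
def IsShortcut (ℓ : Sym2 V → ℝ) {z p q : V} (c : G.Walk z z) (σ : G.Walk p q) : Prop :=
  σ.IsPath ∧ p ∈ c.support ∧ q ∈ c.support ∧ wlen ℓ σ < cdist ℓ c p q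

/-- `σ` is a strict shortcut of `c`: a shortcut meeting `c` only at its endpoints. -/
def IsStrictShortcut (ℓ : Sym2 V → ℝ) {z p q : V} (c : G.Walk z z) (σ : G.Walk p q) : Prop :=
  IsShortcut ℓ c σ ∧ ∀ a ∈ σ.support, a ∈ c.support → a = p ∨ a = q

/-- `v` is a shortcut vertex of `c`, i.e. an endpoint of some strict shortcut of `c`. -/
def ShortcutVertex (ℓ : Sym2 V → ℝ) {z : V} (c : G.Walk z z) (v : V) : Prop :=
  ∃ (p q : V) (σ : G.Walk p q), IsStrictShortcut ℓ c σ ∧ (v = p ∨ v = q)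

/-- `v` is a shortcut vertex of `c` associated to a strict shortcut of length at most `m`. -/
def ShortcutVertexLe (ℓ : Sym2 V → ℝ) {z : V} (c : G.Walk z z) (m : ℝ) (v : V) : Prop :=
  ∃ (p q : V) (σ : G.Walk p q),
    IsStrictShortcut ℓ c σ ∧ wlen ℓ σ ≤ m ∧ (v = p ∨ v = q)

/-- `(k,m)`-edge-chordal: every cycle of length at least `k` has a shortcut consisting of
a single edge of length at most `m`. -/
def EdgeChordal (G : SimpleGraph V) (ℓ : Sym2 V → ℝ) (k m : ℝ) : Prop :=
  ∀ (z : V) (c : G.Walk z z), c.IsCycle → k ≤ wlen ℓ c →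
    ∃ (p q : V) (h : G.Adj p q),
      IsShortcut ℓ c (Walk.cons h Walk.nil) ∧ ℓ s(p, q) ≤ m

/-- `k`-path-chordal: every cycle of length at least `k` admits a shortcut. -/
def PathChordal (G : SimpleGraph V) (ℓ : Sym2 V → ℝ) (k : ℝ) : Prop :=
  ∀ (z : V) (c : G.Walk z z), c.IsCycle → k ≤ wlen ℓ c →
    ∃ (p q : V) (σ : G.Walk p q), IsShortcut ℓ c σ

/-- `(k,m)`-path-chordal: every cycle of length at least `k` admits a shortcut of length
at most `m`. -/
def PathChordalLe (G : SimpleGraph V) (ℓ : Sym2 V → ℝ) (k m : ℝ) : Prop :=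
  ∀ (z : V) (c : G.Walk z z), c.IsCycle → k ≤ wlen ℓ c →
    ∃ (p q : V) (σ : G.Walk p q), IsShortcut ℓ c σ ∧ wlen ℓ σ ≤ m

/-- `ε`-densely `(k,m)`-path-chordal: on every cycle of length at least `k`, the vertices
that are shortcut vertices of strict shortcuts of length at most `m` form an `ε`-dense
subset of `(C, d_C)`. -/
def DenselyPathChordal (G : SimpleGraph V) (ℓ : Sym2 V → ℝ) (ε k m : ℝ) : Prop :=
  ∀ (z : V) (c : G.Walk z z), c.IsCycle → k ≤ wlen ℓ c →
    ∀ x ∈ c.support, ∃ v, ShortcutVertexLe ℓ c m v ∧ cdist ℓ c v x < ε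

/-- `ε`-densely `k`-path-chordal: on every cycle of length at least `k`, the shortcut
vertices (of strict shortcuts, with no bound on their lengths) form an `ε`-dense subset
of `(C, d_C)`. -/
def DenselyKPathChordal (G : SimpleGraph V) (ℓ : Sym2 V → ℝ) (ε k : ℝ) : Prop :=
  ∀ (z : V) (c : G.Walk z z), c.IsCycle → k ≤ wlen ℓ c →
    ∀ x ∈ c.support, ∃ v, ShortcutVertex ℓ c v ∧ cdist ℓ c v x < ε

/-- The geodesic triangle with sides `g1, g2, g3` is `δ`-thin: each side is contained in
the `δ`-neighborhood of the union of the other two sides. -/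
def ThinTriangle (ℓ : Sym2 V → ℝ) (δ : ℝ) {x y z : V}
    (g1 : G.Walk x y) (g2 : G.Walk y z) (g3 : G.Walk z x) : Prop :=
  (∀ p ∈ g1.support, ∃ q, (q ∈ g2.support ∨ q ∈ g3.support) ∧ gdist G ℓ p q ≤ δ) ∧
  (∀ p ∈ g2.support, ∃ q, (q ∈ g3.support ∨ q ∈ g1.support) ∧ gdist G ℓ p q ≤ δ) ∧
  (∀ p ∈ g3.support, ∃ q, (q ∈ g1.support ∨ q ∈ g2.support) ∧ gdist G ℓ p q ≤ δ)

/-- `G` is `δ`-hyperbolic: every geodesic triangle is `δ`-thin. -/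
def Hyperbolic (G : SimpleGraph V) (ℓ : Sym2 V → ℝ) (δ : ℝ) : Prop :=
  ∀ (x y z : V) (g1 : G.Walk x y) (g2 : G.Walk y z) (g3 : G.Walk z x),
    IsGeodesicWalk ℓ g1 → IsGeodesicWalk ℓ g2 → IsGeodesicWalk ℓ g3 →
    ThinTriangle ℓ δ g1 g2 g3

/-- The sharp hyperbolicity constant `δ(G)`. -/
noncomputable def hypConst (G : SimpleGraph V) (ℓ : Sym2 V → ℝ) : ℝ :=
  sInf {δ : ℝ | 0 ≤ δ ∧ Hyperbolic G ℓ δ}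

/-- A walk lies inside the geodesic triangle with sides `g1, g2, g3`. -/
def WalkInTri {x y z u v : V} (g1 : G.Walk x y) (g2 : G.Walk y z) (g3 : G.Walk z x)
    (w : G.Walk u v) : Prop :=
  (∀ e ∈ w.edges, e ∈ g1.edges ∨ e ∈ g2.edges ∨ e ∈ g3.edges) ∧
  ∀ a ∈ w.support, a ∈ g1.support ∨ a ∈ g2.support ∨ a ∈ g3.support

/-- The length metric `d_T` of the geodesic triangle with sides `g1, g2, g3`,
evaluated on vertices of the triangle. -/
noncomputable def tdist (ℓ : Sym2 V → ℝ) {x y z : V} (g1 : G.Walk x y) (g2 : G.Walk y z)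
    (g3 : G.Walk z x) (u v : V) : ℝ :=
  sInf {r : ℝ | ∃ w : G.Walk u v, WalkInTri g1 g2 g3 w ∧ wlen ℓ w = r}

/-- `σ` is a shortcut of the geodesic triangle with sides `g1, g2, g3`: a path joining
two vertices `p, q` of the triangle with `L(σ) < d_T(p, q)`. -/
def IsTriShortcut (ℓ : Sym2 V → ℝ) {x y z p q : V} (g1 : G.Walk x y) (g2 : G.Walk y z)
    (g3 : G.Walk z x) (σ : G.Walk p q) : Prop :=
  σ.IsPath ∧ (p ∈ g1.support ∨ p ∈ g2.support ∨ p ∈ g3.support) ∧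
    (q ∈ g1.support ∨ q ∈ g2.support ∨ q ∈ g3.support) ∧
    wlen ℓ σ < tdist ℓ g1 g2 g3 p q

/-- `v` is a shortcut vertex of the triangle, associated to a shortcut of length
at most `m`. -/
def TriShortcutVertexLe (ℓ : Sym2 V → ℝ) {x y z : V} (g1 : G.Walk x y) (g2 : G.Walk y z)
    (g3 : G.Walk z x) (m : ℝ) (v : V) : Prop :=
  ∃ (p q : V) (σ : G.Walk p q),
    IsTriShortcut ℓ g1 g2 g3 σ ∧ wlen ℓ σ ≤ m ∧ (v = p ∨ v = q)

/-- `ε`-densely `(k,m)`-path-chordal on the triangles: for every geodesic triangle of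
total length at least `k`, the shortcut vertices of shortcuts of length at most `m`
form an `ε`-dense subset of `(T, d_T)`. -/
def DenselyPathChordalOnTriangles (G : SimpleGraph V) (ℓ : Sym2 V → ℝ) (ε k m : ℝ) : Prop :=
  ∀ (x y z : V) (g1 : G.Walk x y) (g2 : G.Walk y z) (g3 : G.Walk z x),
    IsGeodesicWalk ℓ g1 → IsGeodesicWalk ℓ g2 → IsGeodesicWalk ℓ g3 →
    k ≤ wlen ℓ g1 + wlen ℓ g2 + wlen ℓ g3 →
    ∀ p, (p ∈ g1.support ∨ p ∈ g2.support ∨ p ∈ g3.support) →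
      ∃ v, TriShortcutVertexLe ℓ g1 g2 g3 m v ∧ tdist ℓ g1 g2 g3 v p < ε

end Chordality

namespace Chordality

/-- The horizontal edge between `(p-1, q)` and `(p, q)` is present in `G_n` iff `q = 0`,
or `q = n`, or `1 ≤ q ≤ n - 1` and (`p` is odd and `q ≡ 0 (mod 4)`, or `p` is even and
`q ≡ 2 (mod 4)`). -/
def horizOK4 (n p q : ℕ) : Prop :=
  q = 0 ∨ q = n ∨
    (1 ≤ q ∧ q ≤ n - 1 ∧ ((Odd p ∧ q % 4 = 0) ∨ (Even p ∧ q % 4 = 2)))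

/-- The adjacency relation of the graph `G_n` on `{0, …, n} × {0, …, n}`: all vertical
edges `(p, q)(p, q+1)`, and the horizontal edges `(p, q)(p+1, q)` allowed by
`horizOK4`. -/
def gnAdj4 (n : ℕ) (a b : ℕ × ℕ) : Prop :=
  a.1 ≤ n ∧ b.1 ≤ n ∧ a.2 ≤ n ∧ b.2 ≤ n ∧
    ((a.1 = b.1 ∧ b.2 = a.2 + 1) ∨ (a.2 = b.2 ∧ b.1 = a.1 + 1 ∧ horizOK4 n b.1 a.2))

/-- The graph `G` obtained from the graph `ℕ` by attaching, for each `n`, the vertex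
`(0,0)` of `G_n` to the vertex `n` of `ℕ`; the vertex `(n, p, q)` is the vertex `(p, q)`
of the copy `G_n`, and `(n, 0, 0)` is the `n`-th vertex of the spine `ℕ`. -/
def bigG4 : SimpleGraph (ℕ × ℕ × ℕ) :=
  SimpleGraph.fromRel fun a b =>
    (a.2 = ((0 : ℕ), (0 : ℕ)) ∧ b.2 = ((0 : ℕ), (0 : ℕ)) ∧ b.1 = a.1 + 1) ∨
    (a.1 = b.1 ∧ gnAdj4 a.1 a.2 b.2)

end Chordality

/-!
The cycle is the boundary `C` of the grid `G_n`. The grid meets the rest of `G` only in its corner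
`(0,0)`, which lies on `C`, so a strict shortcut `σ` of `C` stays in `G_n` and its inner vertices
lie in the open square. Let `σ` start at `(0, a)` on the left side. If it ends on the bottom, left
or top side, then `L(σ)` is at least the taxicab distance of its endpoints, which is the length of
the arc of `C` joining them through the left side. If it ends inside the right side, it crosses
the open square, where the rows `y ≡ 2x (mod 4)` carrying the edges from column `x` to `x + 1`
alternate with `x`: each column costs about three steps, so `L(σ) ≥ 3n - 2 ≥ d_C`. Hence no
vertex of the left side is a shortcut vertex, and in `G_{2N}` every shortcut vertex is at
`d_C`-distance at least `N` from the midpoint `(0, N)` of the left side.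
-/

namespace SimpleGraph.Walk

variable {V : Type*} {G : SimpleGraph V}

theorem le_add_length_of_darts (φ : V → ℤ) {u v : V} (w : G.Walk u v)
    (h : ∀ d ∈ w.darts, φ d.snd ≤ φ d.fst + 1) : φ v ≤ φ u + w.length := by
  induction w with
  | nil => simp
  | cons hadj w ih =>
    simp only [darts_cons, List.mem_cons, forall_eq_or_imp] at h
    have := ih h.2
    rw [length_cons]
    push_cast
    linarith [h.1]

theorem IsPath.support_subset_of_cut {S : Set V} {b : V}
    (hcut : ∀ x y, G.Adj x y → x ∈ S → y ∉ S → x = b) {u v : V} {w : G.Walk u v}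
    (hw : w.IsPath) (hu : u ∈ S) (hv : v ∈ S) : ∀ x ∈ w.support, x ∈ S := by
  have mem_of_enter : ∀ {a v : V} (w : G.Walk a v), a ∉ S → v ∈ S → b ∈ w.support := by
    intro a v w ha hv
    obtain ⟨d, hd, h1, h2⟩ := w.reverse.exists_boundary_dart S hv ha
    rw [← hcut _ _ d.adj h1 h2]
    simpa using w.reverse.dart_fst_mem_support_of_mem_darts hd
  induction w with
  | nil => simpa using hu
  | @cons a a' v hadj w ih =>
    rw [cons_isPath_iff] at hw
    intro x hx
    rw [support_cons, List.mem_cons] at hx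
    rcases hx with rfl | hx
    · exact hu
    by_cases ha' : a' ∈ S
    · exact ih hw.1 ha' hv x hx
    · exact absurd (hcut _ _ hadj hu ha' ▸ mem_of_enter w ha' hv) hw.2

end SimpleGraph.Walk

namespace Chordality

open SimpleGraph Walk

section UnitLength

variable {V : Type*} {G : SimpleGraph V}

theorem wlen_one {u v : V} (w : G.Walk u v) : wlen (fun _ => (1 : ℝ)) w = w.length := by
  simp [wlen]

theorem wlen_reverse (ℓ : Sym2 V → ℝ) {u v : V} (w : G.Walk u v) :
    wlen ℓ w.reverse = wlen ℓ w := by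
  simp [wlen, List.sum_reverse]

theorem WalkIn.reverse {z u v : V} {c : G.Walk z z} {w : G.Walk u v} (h : WalkIn c w) :
    WalkIn c w.reverse :=
  ⟨by simpa using h.1, by simpa using h.2⟩

theorem cdist_comm (ℓ : Sym2 V → ℝ) {z : V} (c : G.Walk z z) (u v : V) :
    cdist ℓ c u v = cdist ℓ c v u := by
  unfold cdist
  congr 1
  ext x
  constructor <;> rintro ⟨w, hw, rfl⟩ <;> exact ⟨w.reverse, hw.reverse, wlen_reverse ℓ w⟩

theorem cdist_le_length {z u v : V} {c : G.Walk z z} (w : G.Walk u v) (hw : WalkIn c w) :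
    cdist (fun _ => (1 : ℝ)) c u v ≤ w.length := by
  rw [← wlen_one]
  refine csInf_le ⟨0, ?_⟩ ⟨w, hw, rfl⟩
  rintro _ ⟨w', -, rfl⟩
  rw [wlen_one]
  positivity

theorem exists_walkIn {z u v : V} (c : G.Walk z z) (hu : u ∈ c.support) (hv : v ∈ c.support) :
    ∃ w : G.Walk u v, WalkIn c w := by
  classical
  refine ⟨(c.takeUntil u hu).reverse.append (c.takeUntil v hv), fun e he => ?_, fun a ha => ?_⟩
  · rw [edges_append, edges_reverse, List.mem_append, List.mem_reverse] at he
    exact he.elim (fun he => c.edges_takeUntil_subset_edges hu he)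
      (fun he => c.edges_takeUntil_subset_edges hv he)
  · rw [mem_support_append_iff, support_reverse, List.mem_reverse] at ha
    exact ha.elim (fun ha => c.support_takeUntil_subset_support hu ha)
      (fun ha => c.support_takeUntil_subset_support hv ha)

theorem le_cdist {z u v : V} {c : G.Walk z z} (hu : u ∈ c.support) (hv : v ∈ c.support)
    {B : ℝ} (h : ∀ w : G.Walk u v, WalkIn c w → B ≤ w.length) :
    B ≤ cdist (fun _ => (1 : ℝ)) c u v := by
  obtain ⟨w, hw⟩ := exists_walkIn c hu hv
  refine le_csInf ⟨_, w, hw, rfl⟩ ?_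
  rintro _ ⟨w', hw', rfl⟩
  rw [wlen_one]
  exact h w' hw'

theorem IsStrictShortcut.reverse {ℓ : Sym2 V → ℝ} {z p q : V} {c : G.Walk z z}
    {σ : G.Walk p q} (h : IsStrictShortcut ℓ c σ) : IsStrictShortcut ℓ c σ.reverse := by
  obtain ⟨⟨hpath, hp, hq, hlt⟩, hstrict⟩ := h
  refine ⟨⟨hpath.reverse, hq, hp, ?_⟩,
    fun a ha hac => (hstrict a (by simpa using ha) hac).symm⟩
  rwa [wlen_reverse, cdist_comm]

theorem IsStrictShortcut.off_cycle_or_end_of_mem_darts {ℓ : Sym2 V → ℝ} {z p q : V} {c : G.Walk z z}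
    {σ : G.Walk p q} (h : IsStrictShortcut ℓ c σ) {d : G.Dart} (hd : d ∈ σ.darts) :
    (d.fst ∉ c.support ∨ d.fst = q) ∨ (d.snd ∉ c.support ∨ d.snd = q) := by
  by_cases hfc : d.fst ∈ c.support
  · rcases h.2 _ (σ.dart_fst_mem_support_of_mem_darts hd) hfc with hfp | hfq
    · by_cases hsc : d.snd ∈ c.support
      · rcases h.2 _ (σ.dart_snd_mem_support_of_mem_darts hd) hsc with hsp | hsq
        · exact absurd (hfp.trans hsp.symm) d.adj.ne
        · exact Or.inr (Or.inr hsq)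
      · exact Or.inr (Or.inl hsc)
    · exact Or.inl (Or.inr hfq)
  · exact Or.inl (Or.inl hfc)

theorem ShortcutVertex.exists_isStrictShortcut {ℓ : Sym2 V → ℝ} {z v : V} {c : G.Walk z z}
    (h : ShortcutVertex ℓ c v) : ∃ (q : V) (σ : G.Walk v q), IsStrictShortcut ℓ c σ := by
  obtain ⟨p, q, σ, hσ, rfl | rfl⟩ := h
  exacts [⟨q, σ, hσ⟩, ⟨p, σ.reverse, hσ.reverse⟩]

theorem ShortcutVertex.mem_support {ℓ : Sym2 V → ℝ} {z v : V} {c : G.Walk z z}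
    (h : ShortcutVertex ℓ c v) : v ∈ c.support := by
  obtain ⟨q, σ, hσ⟩ := h.exists_isStrictShortcut
  exact hσ.1.2.1

end UnitLength

section SeqWalk

variable {V : Type*} {G : SimpleGraph V} (f : ℕ → V) (hf : ∀ i, G.Adj (f i) (f (i + 1)))

def seqWalk (i : ℕ) : (m : ℕ) → G.Walk (f i) (f (i + m))
  | 0 => nil
  | m + 1 => (seqWalk i m).concat (hf (i + m))

variable {f}

theorem length_seqWalk (i m : ℕ) : (seqWalk f hf i m).length = m := by
  induction m with
  | zero => rfl
  | succ m ih => rw [seqWalk, length_concat, ih]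

theorem support_seqWalk (i m : ℕ) :
    (seqWalk f hf i m).support = (List.range (m + 1)).map (fun t => f (i + t)) := by
  induction m with
  | zero => simp [seqWalk]
  | succ m ih => rw [seqWalk, support_concat, ih, List.range_succ (n := m + 1)]; simp

theorem edges_seqWalk (i m : ℕ) :
    (seqWalk f hf i m).edges = (List.range m).map (fun t => s(f (i + t), f (i + t + 1))) := by
  induction m with
  | zero => simp [seqWalk]
  | succ m ih => rw [seqWalk, edges_concat, ih, List.range_succ]; simp [add_assoc]

variable {p : ℕ}

theorem isCycle_seqWalk_copy (hinj : ∀ a b, f a = f b → a ≡ b [MOD p]) (hp : 3 ≤ p) {z : V}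
    (h0 : f 0 = z) (hz : f (0 + p) = z) : ((seqWalk f hf 0 p).copy h0 hz).IsCycle := by
  have hnil : ¬ ((seqWalk f hf 0 p).copy h0 hz).Nil := by
    rw [not_nil_iff_lt_length, length_copy, length_seqWalk]; omega
  rw [isCycle_iff_isPath_tail_and_le_length, isPath_def, support_tail_of_not_nil _ hnil,
    support_copy, support_seqWalk, length_copy, length_seqWalk, List.range_succ_eq_map]
  refine ⟨?_, hp⟩
  simp only [List.map_cons, List.tail_cons, List.map_map, Function.comp_def, zero_add]
  refine List.Nodup.map_on (fun s hs t ht hst => ?_) List.nodup_range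
  rw [List.mem_range] at hs ht
  exact Nat.ModEq.eq_of_lt_of_lt (Nat.ModEq.add_right_cancel' 1 (hinj _ _ hst)) hs ht

theorem walkIn_seqWalk (hper : Function.Periodic f p) (hp : 0 < p) {z : V}
    (h0 : f 0 = z) (hz : f (0 + p) = z) (i m : ℕ) :
    WalkIn ((seqWalk f hf 0 p).copy h0 hz) (seqWalk f hf i m) := by
  have hmod : ∀ t, f ((i + t) % p) = f (i + t) := fun t => hper.map_mod_nat _
  refine ⟨fun e he => ?_, fun v hv => ?_⟩
  · rw [edges_seqWalk, List.mem_map] at he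
    obtain ⟨t, -, rfl⟩ := he
    rw [edges_copy, edges_seqWalk, List.mem_map]
    refine ⟨(i + t) % p, List.mem_range.2 (Nat.mod_lt _ hp), ?_⟩
    rw [zero_add, hmod, ← hper.map_mod_nat ((i + t) % p + 1), Nat.mod_add_mod,
      hper.map_mod_nat]
  · rw [support_seqWalk, List.mem_map] at hv
    obtain ⟨t, -, rfl⟩ := hv
    rw [support_copy, support_seqWalk, List.mem_map]
    exact ⟨(i + t) % p, List.mem_range.2 (by have := Nat.mod_lt (i + t) hp; omega),
      by rw [zero_add, hmod]⟩

theorem cdist_seqWalk_copy_le (hper : Function.Periodic f p) (hp : 0 < p) {z : V}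
    (h0 : f 0 = z) (hz : f (0 + p) = z) (i m : ℕ) :
    cdist (fun _ => (1 : ℝ)) ((seqWalk f hf 0 p).copy h0 hz) (f i) (f (i + m)) ≤ m := by
  have h := cdist_le_length _ (walkIn_seqWalk hf hper hp h0 hz i m)
  rwa [length_seqWalk] at h

end SeqWalk

theorem bigG4_adj_of_gnAdj4 {n : ℕ} {a b : ℕ × ℕ} (h : gnAdj4 n a b) :
    bigG4.Adj (n, a) (n, b) := by
  refine (fromRel_adj _ _ _).2 ⟨fun hab => ?_, Or.inl (Or.inr ⟨rfl, h⟩)⟩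
  obtain ⟨-, -, -, -, h | h⟩ := h <;> rw [(Prod.mk.inj hab).2] at h <;> omega

theorem gnAdj4_of_bigG4_adj {n : ℕ} {u v : ℕ × ℕ × ℕ} (h : bigG4.Adj u v) (hu : u.1 = n)
    (hv : v.1 = n) : gnAdj4 n u.2 v.2 ∨ gnAdj4 n v.2 u.2 := by
  obtain ⟨-, (⟨-, -, h⟩ | ⟨-, h⟩) | (⟨-, -, h⟩ | ⟨-, h⟩)⟩ := (fromRel_adj _ _ _).1 h
  · omega
  · exact Or.inl (hu ▸ h)
  · omega
  · exact Or.inr (hv ▸ h)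

def gridSet (n : ℕ) : Set (ℕ × ℕ × ℕ) := {v | v.1 = n ∧ v.2.1 ≤ n ∧ v.2.2 ≤ n}

theorem eq_of_bigG4_adj_of_mem_gridSet {n : ℕ} {u v : ℕ × ℕ × ℕ} (h : bigG4.Adj u v)
    (hu : u ∈ gridSet n) (hv : v ∉ gridSet n) : u = (n, 0, 0) := by
  simp only [gridSet, Set.mem_ofPred_eq] at hu hv
  obtain ⟨-, (⟨hu2, -, -⟩ | ⟨h, hadj⟩) | (⟨-, hu2, -⟩ | ⟨h, hadj⟩)⟩ := (fromRel_adj _ _ _).1 h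
  · exact Prod.ext hu.1 hu2
  · obtain ⟨_, _, _, _, -⟩ := hadj
    omega
  · exact Prod.ext hu.1 hu2
  · obtain ⟨_, _, _, _, -⟩ := hadj
    omega

section Boundary

def perimeterPoint (n k : ℕ) : ℕ × ℕ :=
  if k ≤ n then (k, 0)
  else if k ≤ 2 * n then (n, k - n)
  else if k ≤ 3 * n then (3 * n - k, n)
  else (0, 4 * n - k)

def boundaryVertex (n i : ℕ) : ℕ × ℕ × ℕ := (n, perimeterPoint n (i % (4 * n)))

variable {n : ℕ}

theorem boundaryVertex_of_lt {i : ℕ} (hi : i < 4 * n) :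
    boundaryVertex n i = (n, perimeterPoint n i) := by
  rw [boundaryVertex, Nat.mod_eq_of_lt hi]

theorem boundaryVertex_eq_iff (hn : 1 ≤ n) {i j : ℕ} :
    boundaryVertex n i = boundaryVertex n j ↔ i ≡ j [MOD 4 * n] := by
  have hi := Nat.mod_lt i (show 0 < 4 * n by omega)
  have hj := Nat.mod_lt j (show 0 < 4 * n by omega)
  simp only [boundaryVertex, Prod.mk.injEq, true_and, Nat.ModEq]
  refine ⟨fun h => ?_, fun h => by rw [h]⟩
  unfold perimeterPoint at h
  split_ifs at h <;> simp only [Prod.mk.injEq] at h <;> omega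

theorem boundaryVertex_periodic (n : ℕ) : Function.Periodic (boundaryVertex n) (4 * n) :=
  fun i => by rw [boundaryVertex, boundaryVertex, Nat.add_mod_right]

theorem boundaryVertex_bottom {x : ℕ} (hn : 1 ≤ n) (hx : x ≤ n) :
    boundaryVertex n x = (n, x, 0) := by
  rw [boundaryVertex_of_lt (by omega), perimeterPoint, if_pos hx]

theorem boundaryVertex_right {y : ℕ} (hn : 1 ≤ n) (hy : y ≤ n) :
    boundaryVertex n (n + y) = (n, n, y) := by
  rw [boundaryVertex_of_lt (by omega), perimeterPoint]
  split_ifs <;> simp only [Prod.mk.injEq, true_and] <;> omega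

theorem boundaryVertex_top {x : ℕ} (hn : 1 ≤ n) (hx : x ≤ n) :
    boundaryVertex n (3 * n - x) = (n, x, n) := by
  rw [boundaryVertex_of_lt (by omega), perimeterPoint]
  split_ifs <;> simp only [Prod.mk.injEq, true_and, and_true] <;> omega

theorem boundaryVertex_left {y : ℕ} (hy : y ≤ n) :
    boundaryVertex n (4 * n - y) = (n, 0, y) := by
  rcases Nat.eq_zero_or_pos y with rfl | hy0
  · rw [Nat.sub_zero, boundaryVertex, Nat.mod_self, perimeterPoint, if_pos (Nat.zero_le n)]
  rw [boundaryVertex_of_lt (by omega), perimeterPoint]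
  split_ifs <;> simp only [Prod.mk.injEq, true_and] <;> omega

theorem boundaryVertex_adj (hn : 1 ≤ n) (i : ℕ) :
    bigG4.Adj (boundaryVertex n i) (boundaryVertex n (i + 1)) := by
  rw [← (boundaryVertex_eq_iff hn).2 (Nat.mod_modEq i (4 * n)),
    ← (boundaryVertex_eq_iff hn).2 ((Nat.mod_modEq i (4 * n)).add_right 1)]
  have hk := Nat.mod_lt i (show 0 < 4 * n by omega)
  generalize i % (4 * n) = k at hk
  by_cases h1 : k < n
  · rw [boundaryVertex_bottom hn h1.le, boundaryVertex_bottom hn h1]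
    exact bigG4_adj_of_gnAdj4 ⟨by omega, h1, by omega, by omega, Or.inr ⟨rfl, rfl, Or.inl rfl⟩⟩
  by_cases h2 : k < 2 * n
  · obtain ⟨y, rfl⟩ : ∃ y, k = n + y := ⟨k - n, by omega⟩
    rw [boundaryVertex_right hn (by omega), add_assoc, boundaryVertex_right hn (by omega)]
    exact bigG4_adj_of_gnAdj4 ⟨le_rfl, le_rfl, by omega, by omega, Or.inl ⟨rfl, rfl⟩⟩
  by_cases h3 : k < 3 * n
  · obtain ⟨x, rfl⟩ : ∃ x, k = 3 * n - (x + 1) := ⟨3 * n - k - 1, by omega⟩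
    rw [boundaryVertex_top hn (by omega), show 3 * n - (x + 1) + 1 = 3 * n - x by omega,
      boundaryVertex_top hn (by omega)]
    exact (bigG4_adj_of_gnAdj4 (a := (x, n)) (b := (x + 1, n))
      ⟨by omega, by omega, le_rfl, le_rfl,
      Or.inr ⟨rfl, rfl, Or.inr (Or.inl rfl)⟩⟩).symm
  · obtain ⟨y, rfl⟩ : ∃ y, k = 4 * n - (y + 1) := ⟨4 * n - k - 1, by omega⟩
    rw [boundaryVertex_left (by omega), show 4 * n - (y + 1) + 1 = 4 * n - y by omega,
      boundaryVertex_left (by omega)]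
    exact (bigG4_adj_of_gnAdj4 (a := (0, y)) (b := (0, y + 1))
      ⟨by omega, by omega, by omega, by omega, Or.inl ⟨rfl, rfl⟩⟩).symm

def boundaryCycle (n : ℕ) (hn : 1 ≤ n) : bigG4.Walk (n, 0, 0) (n, 0, 0) :=
  (seqWalk _ (boundaryVertex_adj hn) 0 (4 * n)).copy (boundaryVertex_bottom hn (Nat.zero_le n))
    (by rw [zero_add, ← boundaryVertex_left (Nat.zero_le n), Nat.sub_zero])

theorem isCycle_boundaryCycle (hn : 1 ≤ n) : (boundaryCycle n hn).IsCycle :=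
  isCycle_seqWalk_copy _ (fun _ _ => (boundaryVertex_eq_iff hn).1) (by omega) _ _

theorem length_boundaryCycle (hn : 1 ≤ n) : (boundaryCycle n hn).length = 4 * n := by
  rw [boundaryCycle, length_copy, length_seqWalk]

theorem cdist_boundaryCycle_le (hn : 1 ≤ n) (i m : ℕ) :
    cdist (fun _ => (1 : ℝ)) (boundaryCycle n hn) (boundaryVertex n i)
      (boundaryVertex n (i + m)) ≤ m :=
  cdist_seqWalk_copy_le _ (boundaryVertex_periodic n) (by omega) _ _ i m

theorem mem_support_boundaryCycle_iff (hn : 1 ≤ n) (v : ℕ × ℕ × ℕ) :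
    v ∈ (boundaryCycle n hn).support ↔ v.1 = n ∧ v.2.1 ≤ n ∧ v.2.2 ≤ n ∧
      (v.2.1 = 0 ∨ v.2.1 = n ∨ v.2.2 = 0 ∨ v.2.2 = n) := by
  rw [boundaryCycle, support_copy, support_seqWalk, List.mem_map]
  constructor
  · rintro ⟨i, -, rfl⟩
    have := Nat.mod_lt i (show 0 < 4 * n by omega)
    refine ⟨rfl, ?_⟩
    simp only [boundaryVertex, perimeterPoint, apply_ite Prod.fst, apply_ite Prod.snd]
    split_ifs <;> omega
  · obtain ⟨v1, x, y⟩ := v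
    rintro ⟨h1, hx, hy, h⟩
    dsimp only at h1 hx hy h
    simp only [List.mem_range, zero_add, h1]
    rcases h with rfl | rfl | rfl | rfl
    · exact ⟨4 * n - y, by omega, boundaryVertex_left hy⟩
    · exact ⟨x + y, by omega, boundaryVertex_right hn hy⟩
    · exact ⟨x, by omega, boundaryVertex_bottom hn hx⟩
    · exact ⟨3 * y - x, by omega, boundaryVertex_top hn hx⟩

end Boundary

theorem gnAdj4_step {n : ℕ} {a b : ℕ × ℕ} (h : gnAdj4 n a b ∨ gnAdj4 n b a) :
    a.1 = b.1 ∧ (b.2 = a.2 + 1 ∨ a.2 = b.2 + 1) ∨ a.2 = b.2 ∧ (b.1 = a.1 + 1 ∨ a.1 = b.1 + 1) := by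
  unfold gnAdj4 at h
  omega

theorem forall_darts_gnAdj4 {n : ℕ} {u v : ℕ × ℕ × ℕ} (w : bigG4.Walk u v)
    (hw : ∀ x ∈ w.support, x.1 = n) :
    ∀ d ∈ w.darts, gnAdj4 n d.fst.2 d.snd.2 ∨ gnAdj4 n d.snd.2 d.fst.2 := fun d hd =>
  gnAdj4_of_bigG4_adj d.adj (hw _ (w.dart_fst_mem_support_of_mem_darts hd))
    (hw _ (w.dart_snd_mem_support_of_mem_darts hd))

theorem taxicab_le_length {n a : ℕ} {v : ℕ × ℕ × ℕ} (w : bigG4.Walk (n, 0, a) v)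
    (hw : ∀ x ∈ w.support, x.1 = n) : (v.2.1 : ℤ) + |(v.2.2 : ℤ) - a| ≤ w.length := by
  have hstep := forall_darts_gnAdj4 w hw
  have h₁ := w.le_add_length_of_darts (fun x => x.2.1 + x.2.2)
    (fun d hd => by have := gnAdj4_step (hstep d hd); omega)
  have h₂ := w.le_add_length_of_darts (fun x => x.2.1 - x.2.2)
    (fun d hd => by have := gnAdj4_step (hstep d hd); omega)
  have : |(v.2.2 : ℤ) - a| ≤ w.length - v.2.1 :=
    abs_sub_le_iff.2 ⟨by push_cast at h₁; linarith, by push_cast at h₂; linarith⟩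
  linarith

/- Horizontal edges leave column `x` to the right only in the rows `y ≡ 2x (mod 4)` (besides
rows `0` and `n`), and `rowGap x y` is the distance from `y` to the nearest such row. Away from
rows `0` and `n`, a step to the right adds `3` to `3x` and raises `rowGap` from `0` to `2`, and a
vertical step changes `rowGap` by at most `1`: the potential grows by at most `1` per step. -/
def rowGap (x y : ℕ) : ℕ := min ((y + 2 * x) % 4) (4 - (y + 2 * x) % 4)

def crossingPotential (v : ℕ × ℕ × ℕ) : ℤ := 3 * v.2.1 - rowGap v.2.1 v.2.2

theorem crossingPotential_step {n : ℕ} {u v : ℕ × ℕ × ℕ}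
    (h : gnAdj4 n u.2 v.2 ∨ gnAdj4 n v.2 u.2)
    (hrow : 1 ≤ u.2.2 ∧ u.2.2 < n ∨ 1 ≤ v.2.2 ∧ v.2.2 < n) :
    crossingPotential v ≤ crossingPotential u + 1 := by
  simp only [gnAdj4, horizOK4, Nat.odd_iff, Nat.even_iff] at h
  simp only [crossingPotential, rowGap]
  omega

theorem three_mul_sub_two_le_length {n a y : ℕ} (w : bigG4.Walk (n, 0, a) (n, n, y))
    (hw : ∀ x ∈ w.support, x.1 = n)
    (hrow : ∀ d ∈ w.darts, 1 ≤ d.fst.2.2 ∧ d.fst.2.2 < n ∨ 1 ≤ d.snd.2.2 ∧ d.snd.2.2 < n) :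
    3 * (n : ℤ) - 2 ≤ w.length := by
  have hstep := forall_darts_gnAdj4 w hw
  have h := w.le_add_length_of_darts crossingPotential
    (fun d hd => crossingPotential_step (hstep d hd) (hrow d hd))
  simp only [crossingPotential, rowGap] at h
  omega

section NoShortcut

variable {n : ℕ}

theorem cdist_left_le_taxicab (hn : 1 ≤ n) {a x y : ℕ} (ha : a ≤ n) (hx : x ≤ n) (hy : y ≤ n)
    (hside : x = 0 ∨ y = 0 ∨ y = n) :
    cdist (fun _ => (1 : ℝ)) (boundaryCycle n hn) (n, 0, a) (n, x, y) ≤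
      (((x : ℤ) + |(y : ℤ) - a| : ℤ) : ℝ) := by
  have hcd := cdist_boundaryCycle_le hn
  suffices ∃ m : ℕ, (m : ℤ) ≤ x + |(y : ℤ) - a| ∧
      cdist (fun _ => (1 : ℝ)) (boundaryCycle n hn) (n, 0, a) (n, x, y) ≤ m by
    obtain ⟨m, hm, h⟩ := this
    exact h.trans (by exact_mod_cast hm)
  have := le_abs_self ((y : ℤ) - a)
  have := neg_abs_le ((y : ℤ) - a)
  rcases hside with rfl | rfl | hyn
  · rcases le_total a y with hay | hya
    · refine ⟨y - a, by omega, ?_⟩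
      have h := hcd (4 * n - y) (y - a)
      rwa [show 4 * n - y + (y - a) = 4 * n - a by omega, boundaryVertex_left hy,
        boundaryVertex_left ha, cdist_comm] at h
    · refine ⟨a - y, by omega, ?_⟩
      have h := hcd (4 * n - a) (a - y)
      rwa [show 4 * n - a + (a - y) = 4 * n - y by omega, boundaryVertex_left hy,
        boundaryVertex_left ha] at h
  · refine ⟨a + x, by omega, ?_⟩
    have h := hcd (4 * n - a) (a + x)
    rwa [show 4 * n - a + (a + x) = x + 4 * n by omega, boundaryVertex_periodic n x,
      boundaryVertex_left ha, boundaryVertex_bottom hn hx] at h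
  · subst y
    refine ⟨x + (n - a), by omega, ?_⟩
    have h := hcd (3 * n - x) (x + (n - a))
    rwa [show 3 * n - x + (x + (n - a)) = 4 * n - a by omega, boundaryVertex_left ha,
      boundaryVertex_top hn hx, cdist_comm] at h

theorem cdist_left_right_le (hn : 2 ≤ n) {a y : ℕ} (ha : a ≤ n) (hy : y ≤ n) :
    cdist (fun _ => (1 : ℝ)) (boundaryCycle n (by omega)) (n, 0, a) (n, n, y) ≤ 3 * n - 2 := by
  have hcd := cdist_boundaryCycle_le (show 1 ≤ n by omega)
  suffices ∃ m : ℕ, m + 2 ≤ 3 * n ∧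
      cdist (fun _ => (1 : ℝ)) (boundaryCycle n (by omega)) (n, 0, a) (n, n, y) ≤ m by
    obtain ⟨m, hm, h⟩ := this
    refine h.trans ?_
    rw [le_sub_iff_add_le]
    exact_mod_cast hm
  by_cases hay : 2 ≤ a + y
  · refine ⟨3 * n - a - y, by omega, ?_⟩
    have h := hcd (n + y) (3 * n - a - y)
    rwa [show n + y + (3 * n - a - y) = 4 * n - a by omega, boundaryVertex_left ha,
      boundaryVertex_right (by omega) hy, cdist_comm] at h
  · refine ⟨a + n + y, by omega, ?_⟩
    have h := hcd (4 * n - a) (a + n + y)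
    rwa [show 4 * n - a + (a + n + y) = n + y + 4 * n by omega,
      boundaryVertex_periodic n (n + y), boundaryVertex_left ha,
      boundaryVertex_right (by omega) hy] at h

theorem not_isStrictShortcut_of_left (hn : 1 ≤ n) {a : ℕ} (ha : a ≤ n) {r : ℕ × ℕ × ℕ}
    (σ : bigG4.Walk (n, 0, a) r) :
    ¬ IsStrictShortcut (fun _ => (1 : ℝ)) (boundaryCycle n hn) σ := by
  intro hσ
  obtain ⟨hpath, -, hr, hlt⟩ := hσ.1
  rw [wlen_one] at hlt
  have hmem := mem_support_boundaryCycle_iff hn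
  obtain ⟨r1, x, y⟩ := r
  obtain ⟨hr1, hx, hy, hside⟩ := (hmem _).1 hr
  dsimp only at hr1 hx hy hside
  subst r1
  have hgrid : ∀ v ∈ σ.support, v ∈ gridSet n :=
    hpath.support_subset_of_cut (fun _ _ h hu hv => eq_of_bigG4_adj_of_mem_gridSet h hu hv)
      ⟨rfl, Nat.zero_le n, ha⟩ ⟨rfl, hx, hy⟩
  have hlevel : ∀ v ∈ σ.support, v.1 = n := fun v hv => (hgrid v hv).1
  by_cases hright : x = n ∧ 1 ≤ y ∧ y < n
  · obtain ⟨hxn, hy1, hyn⟩ := hright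
    subst x
    have hrow : ∀ v ∈ σ.support, v ∉ (boundaryCycle n hn).support ∨ v = (n, n, y) →
        1 ≤ v.2.2 ∧ v.2.2 < n := by
      rintro v hv (hvc | rfl)
      · obtain ⟨hv1, hvx, hvy⟩ := hgrid v hv
        rw [hmem] at hvc
        omega
      · exact ⟨hy1, hyn⟩
    have hlen := three_mul_sub_two_le_length σ hlevel fun d hd =>
      (hσ.off_cycle_or_end_of_mem_darts hd).imp (hrow _ (σ.dart_fst_mem_support_of_mem_darts hd))
        (hrow _ (σ.dart_snd_mem_support_of_mem_darts hd))
    have hcd := cdist_left_right_le (by omega) ha hy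
    have : (3 * n - 2 : ℝ) ≤ σ.length := by exact_mod_cast hlen
    linarith
  · have hlen := taxicab_le_length σ hlevel
    have hcd := cdist_left_le_taxicab hn ha hx hy (by omega)
    have : (((x : ℤ) + |(y : ℤ) - a| : ℤ) : ℝ) ≤ σ.length := by exact_mod_cast hlen
    linarith

theorem not_shortcutVertex_left (hn : 1 ≤ n) {q : ℕ} (hq : q ≤ n) :
    ¬ ShortcutVertex (fun _ => (1 : ℝ)) (boundaryCycle n hn) (n, 0, q) := fun h =>
  let ⟨_, σ, hσ⟩ := h.exists_isStrictShortcut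
  not_isStrictShortcut_of_left hn hq σ hσ

theorem le_cdist_leftMidpoint_of_shortcutVertex {N : ℕ} (hN : 1 ≤ 2 * N) {v : ℕ × ℕ × ℕ}
    (hv : ShortcutVertex (fun _ => (1 : ℝ)) (boundaryCycle (2 * N) hN) v) :
    (N : ℝ) ≤ cdist (fun _ => (1 : ℝ)) (boundaryCycle (2 * N) hN) v (2 * N, 0, N) := by
  have hmem := mem_support_boundaryCycle_iff hN
  obtain ⟨hv1, hvx, hvy, hside⟩ := (hmem v).1 hv.mem_support
  have hv0 : v.2.1 ≠ 0 := fun h0 =>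
    not_shortcutVertex_left hN hvy ((Prod.ext hv1 (Prod.ext h0 rfl) : v = (2 * N, 0, v.2.2)) ▸ hv)
  refine le_cdist hv.mem_support (by rw [hmem]; dsimp only; omega) fun w hw => ?_
  have h := taxicab_le_length w.reverse fun x hx =>
    ((hmem x).1 (hw.2 x (by simpa using hx))).1
  rw [length_reverse] at h
  have := le_abs_self ((v.2.2 : ℤ) - N)
  have := neg_abs_le ((v.2.2 : ℤ) - N)
  exact_mod_cast (show (N : ℤ) ≤ w.length by omega)

end NoShortcut

theorem bigG4_not_denselyKPathChordal_general (ε k : ℝ) (hε : 0 < ε) :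
    ¬ DenselyKPathChordal bigG4 (fun _ => (1 : ℝ)) ε k ∧
    ∀ n : ℕ, k ≤ (n : ℝ) → 2 * ε ≤ (n : ℝ) →
      ∃ c : bigG4.Walk (n, 0, 0) (n, 0, 0), c.IsCycle ∧
        (∀ v ∈ c.support, v.1 = n ∧ v.2.1 ≤ n ∧ v.2.2 ≤ n ∧
          (v.2.1 = 0 ∨ v.2.1 = n ∨ v.2.2 = 0 ∨ v.2.2 = n)) ∧
        (n, n, 0) ∈ c.support ∧ (n, n, n) ∈ c.support ∧ (n, 0, n) ∈ c.support ∧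
        ∀ q : ℕ, q ≤ n → ¬ ShortcutVertex (fun _ => (1 : ℝ)) c (n, 0, q) := by
  refine ⟨fun hD => ?_, fun n _ hεn => ?_⟩
  · obtain ⟨N, hkN, hεN⟩ : ∃ N : ℕ, k ≤ N ∧ ε ≤ N :=
      ⟨max ⌈k⌉₊ ⌈ε⌉₊, (Nat.le_ceil k).trans (by exact_mod_cast le_max_left _ _),
        (Nat.le_ceil ε).trans (by exact_mod_cast le_max_right _ _)⟩
    have hN : 1 ≤ 2 * N := by
      have : (0 : ℝ) < N := hε.trans_le hεN
      have : 0 < N := by exact_mod_cast this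
      omega
    have hlen : k ≤ wlen (fun _ => (1 : ℝ)) (boundaryCycle (2 * N) hN) := by
      rw [wlen_one, length_boundaryCycle]
      push_cast
      linarith [N.cast_nonneg (α := ℝ)]
    obtain ⟨v, hv, hvx⟩ := hD _ _ (isCycle_boundaryCycle hN) hlen (2 * N, 0, N)
      (by rw [mem_support_boundaryCycle_iff]; dsimp only; omega)
    linarith [le_cdist_leftMidpoint_of_shortcutVertex hN hv]
  · have hn : 1 ≤ n := by
      have : (0 : ℝ) < n := by linarith
      exact_mod_cast this
    have hmem := mem_support_boundaryCycle_iff hn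
    exact ⟨boundaryCycle n hn, isCycle_boundaryCycle hn, fun v hv => (hmem v).1 hv,
      (hmem _).2 ⟨rfl, le_rfl, Nat.zero_le n, Or.inr (Or.inl rfl)⟩,
      (hmem _).2 ⟨rfl, le_rfl, le_rfl, Or.inr (Or.inl rfl)⟩,
      (hmem _).2 ⟨rfl, Nat.zero_le n, le_rfl, Or.inl rfl⟩,
      fun q hq => not_shortcutVertex_left hn hq⟩

/-- The graph `G`, obtained by attaching the grids `G_n` (with the
`mod 4` pattern of horizontal edges) to the graph `ℕ`, all edges of length `1`, is not
`ε`-densely `k`-path-chordal for any `ε > 0` and `k > 10`: for `n ≥ max {k, 2ε}`, on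
the geodesic-square cycle in `G_n` with corner vertices `(0,0), (n,0), (n,n), (0,n)`,
no vertex of the form `(0, q)`, `0 ≤ q ≤ n`, is a shortcut vertex. -/
theorem bigG4_not_denselyKPathChordal (ε k : ℝ) (hε : 0 < ε) (hk : 10 < k) :
    ¬ DenselyKPathChordal bigG4 (fun _ => (1 : ℝ)) ε k ∧
    ∀ n : ℕ, k ≤ (n : ℝ) → 2 * ε ≤ (n : ℝ) →
      ∃ c : bigG4.Walk (n, 0, 0) (n, 0, 0), c.IsCycle ∧
        (∀ v ∈ c.support, v.1 = n ∧ v.2.1 ≤ n ∧ v.2.2 ≤ n ∧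
          (v.2.1 = 0 ∨ v.2.1 = n ∨ v.2.2 = 0 ∨ v.2.2 = n)) ∧
        (n, n, 0) ∈ c.support ∧ (n, n, n) ∈ c.support ∧ (n, 0, n) ∈ c.support ∧
        ∀ q : ℕ, q ≤ n → ¬ ShortcutVertex (fun _ => (1 : ℝ)) c (n, 0, q) :=
  bigG4_not_denselyKPathChordal_general ε k hε

end Chordality
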